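/- Let α > 0, x ∈ ℝ, t > 0 with x/t ≤ 1/(12α), and set k₂ = (2/3)·(−1 + √(1 − 12α·x/t)). For every real l ≥ 0 and k = k₂ + l·e^{−iπ/6} one has Re(Φ(k) − Φ(−2/3)) = (1/(64α²))·(l³ + (3√3/2)·(k₂ + 2/3)·l²), and consequently Re(Φ(k) − Φ(−2/3)) ≥ |k − k₂|³/(64α²) ≥ 0. -/

import Mathlib

/-!
Up to the factor `i/(64α²)`, `Φ` is the real cubic `p(k) = k³ + 2k² + 16α(x/t)k`, so `Φ` is purely
imaginary on the real axis, and `k₂` is a real root of `p'`. Taylor expansion at `k₂` leaves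
`Re(Φ(k₂ + h) - Φ(-2/3)) = -Im((3k₂ + 2)h² + h³)/(64α²)`. On the ray `h = l·e^{-iπ/6}` one has
`h³ = -i l³` and `Im h² = -(√3/2) l²`, and `k₂ + 2/3 = (2/3)√(1 - 12αx/t) ≥ 0`.
-/

open Complex

/-- The phase function Φ(k) = (i/(4α))·[(x/t)·k + (1/(16α))·(k³ + 2k²)]. -/
noncomputable def Phi (α x t : ℝ) (k : ℂ) : ℂ :=
  (Complex.I / (4 * (α : ℂ))) *
    (((x / t : ℝ) : ℂ) * k + (1 / (16 * (α : ℂ))) * (k ^ 3 + 2 * k ^ 2))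

theorem Phi_eq_I_div_mul (α x t : ℝ) (k : ℂ) :
    Phi α x t k =
      I / ((64 * α ^ 2 : ℝ) : ℂ) * (k ^ 3 + 2 * k ^ 2 + ((16 * α * (x / t) : ℝ) : ℂ) * k) := by
  rcases eq_or_ne α 0 with rfl | hα
  · simp [Phi]
  · have hαC : (α : ℂ) ≠ 0 := ofReal_ne_zero.mpr hα
    unfold Phi
    push_cast
    field_simp
    ring

theorem re_I_div_ofReal_mul (r : ℝ) (z : ℂ) : (I / (r : ℂ) * z).re = -z.im / r := by
  rw [div_mul_eq_mul_div, div_ofReal_re, I_mul_re]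

theorem Phi_re_ofReal (α x t r : ℝ) : (Phi α x t r).re = 0 := by
  rw [Phi_eq_I_div_mul, re_I_div_ofReal_mul]
  norm_cast
  simp

theorem cubic_add_of_deriv_eq_zero {a c : ℂ} (ha : 3 * a ^ 2 + 4 * a + c = 0) (h : ℂ) :
    (a + h) ^ 3 + 2 * (a + h) ^ 2 + c * (a + h) =
      (a ^ 3 + 2 * a ^ 2 + c * a) + (3 * a + 2) * h ^ 2 + h ^ 3 := by
  linear_combination h * ha

theorem Phi_sub_re_of_critical {α x t k₀ : ℝ} (hk₀ : 3 * k₀ ^ 2 + 4 * k₀ + 16 * α * (x / t) = 0)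
    (h : ℂ) :
    (Phi α x t (k₀ + h) - Phi α x t (-2 / 3)).re =
      -(((3 * k₀ + 2 : ℝ) : ℂ) * h ^ 2 + h ^ 3).im / (64 * α ^ 2) := by
  have hcrit : 3 * (k₀ : ℂ) ^ 2 + 4 * k₀ + ((16 * α * (x / t) : ℝ) : ℂ) = 0 := by
    exact_mod_cast hk₀
  have hreal := Phi_re_ofReal α x t (-2 / 3)
  push_cast at hreal
  rw [sub_re, hreal, sub_zero, Phi_eq_I_div_mul, cubic_add_of_deriv_eq_zero hcrit,
    re_I_div_ofReal_mul, add_assoc, add_im]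
  norm_cast
  simp

theorem exp_neg_I_mul_pi_div_six :
    exp (-(I * (Real.pi / 6))) = (Real.sqrt 3 / 2 : ℝ) - I / 2 := by
  rw [show -(I * (Real.pi / 6 : ℂ)) = ((-(Real.pi / 6) : ℝ) : ℂ) * I by push_cast; ring,
    exp_mul_I, ← ofReal_cos, ← ofReal_sin, Real.cos_neg, Real.sin_neg, Real.cos_pi_div_six,
    Real.sin_pi_div_six]
  push_cast
  ring

theorem norm_exp_neg_I_mul_pi_div_six : ‖exp (-(I * (Real.pi / 6)))‖ = 1 := by
  rw [norm_exp]
  simp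

theorem ofReal_sqrt_three_sq : ((Real.sqrt 3 : ℝ) : ℂ) ^ 2 = 3 := by
  exact_mod_cast Real.sq_sqrt (by norm_num : (0 : ℝ) ≤ 3)

theorem exp_neg_I_mul_pi_div_six_sq :
    exp (-(I * (Real.pi / 6))) ^ 2 = 1 / 2 - (Real.sqrt 3 / 2 : ℝ) * I := by
  rw [exp_neg_I_mul_pi_div_six]
  push_cast
  linear_combination (1 / 4) * ofReal_sqrt_three_sq + (1 / 4) * I_sq

theorem exp_neg_I_mul_pi_div_six_pow_three : exp (-(I * (Real.pi / 6))) ^ 3 = -I := by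
  rw [pow_succ, exp_neg_I_mul_pi_div_six_sq, exp_neg_I_mul_pi_div_six]
  push_cast
  linear_combination (-I / 4) * ofReal_sqrt_three_sq + ((Real.sqrt 3 : ℂ) / 4) * I_sq

theorem im_quadratic_cubic_along_ray (a l : ℝ) :
    ((a : ℂ) * ((l : ℂ) * exp (-(I * (Real.pi / 6)))) ^ 2 +
        ((l : ℂ) * exp (-(I * (Real.pi / 6)))) ^ 3).im =
      -(Real.sqrt 3 / 2 * a * l ^ 2 + l ^ 3) := by
  rw [mul_pow, mul_pow, exp_neg_I_mul_pi_div_six_sq, exp_neg_I_mul_pi_div_six_pow_three,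
    ← ofReal_pow, ← ofReal_pow]
  simp only [add_im, mul_im, sub_re, sub_im, neg_re, neg_im, ofReal_re, ofReal_im, I_re, I_im,
    div_ofNat_re, div_ofNat_im, one_re, one_im]
  ring

theorem quadratic_root_of_sqrt {c k : ℝ} (hc : c ≤ 1)
    (hk : k = 2 / 3 * (-1 + Real.sqrt (1 - c))) :
    3 * k ^ 2 + 4 * k + 4 / 3 * c = 0 := by
  have hs := Real.sq_sqrt (sub_nonneg.mpr hc)
  rw [hk]
  linear_combination 4 / 3 * hs

theorem stmt_7_general (α x t : ℝ) (hα : 0 < α) (hxt : x / t ≤ 1 / (12 * α))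
    (k₂ : ℝ) (hk₂ : k₂ = (2/3) * (-1 + Real.sqrt (1 - 12 * α * (x / t))))
    (l : ℝ) (hl : 0 ≤ l) (k : ℂ)
    (hk : k = (k₂ : ℂ) + (l : ℂ) * Complex.exp (-(Complex.I * (Real.pi / 6)))) :
    (Phi α x t k - Phi α x t (-2/3)).re =
        (1 / (64 * α ^ 2)) * (l ^ 3 + (3 * Real.sqrt 3 / 2) * (k₂ + 2/3) * l ^ 2) ∧
      (Phi α x t k - Phi α x t (-2/3)).re ≥ ‖k - (k₂ : ℂ)‖ ^ 3 / (64 * α ^ 2) ∧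
      ‖k - (k₂ : ℂ)‖ ^ 3 / (64 * α ^ 2) ≥ 0 := by
  have hc : 12 * α * (x / t) ≤ 1 := by
    rw [le_div_iff₀ (by positivity)] at hxt
    linarith
  have hcrit : 3 * k₂ ^ 2 + 4 * k₂ + 16 * α * (x / t) = 0 := by
    linear_combination quadratic_root_of_sqrt hc hk₂
  have hre : (Phi α x t k - Phi α x t (-2/3)).re =
      (1 / (64 * α ^ 2)) * (l ^ 3 + (3 * Real.sqrt 3 / 2) * (k₂ + 2/3) * l ^ 2) := by
    rw [hk, Phi_sub_re_of_critical hcrit, im_quadratic_cubic_along_ray]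
    ring
  have hnorm : ‖k - (k₂ : ℂ)‖ = l := by
    rw [hk, add_sub_cancel_left, norm_mul, norm_exp_neg_I_mul_pi_div_six, norm_real,
      Real.norm_of_nonneg hl, mul_one]
  have hshift : 0 ≤ k₂ + 2 / 3 := by
    rw [hk₂]
    linarith [Real.sqrt_nonneg (1 - 12 * α * (x / t))]
  refine ⟨hre, ?_, by positivity⟩
  rw [hre, hnorm, ge_iff_le, div_eq_mul_one_div, mul_comm]
  gcongr
  exact le_add_of_nonneg_right (by positivity)

theorem stmt_7 (α x t : ℝ) (hα : 0 < α) (ht : 0 < t) (hxt : x / t ≤ 1 / (12 * α))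
    (k₂ : ℝ) (hk₂ : k₂ = (2/3) * (-1 + Real.sqrt (1 - 12 * α * (x / t))))
    (l : ℝ) (hl : 0 ≤ l) (k : ℂ)
    (hk : k = (k₂ : ℂ) + (l : ℂ) * Complex.exp (-(Complex.I * (Real.pi / 6)))) :
    (Phi α x t k - Phi α x t (-2/3)).re =
        (1 / (64 * α ^ 2)) * (l ^ 3 + (3 * Real.sqrt 3 / 2) * (k₂ + 2/3) * l ^ 2) ∧
      (Phi α x t k - Phi α x t (-2/3)).re ≥ ‖k - (k₂ : ℂ)‖ ^ 3 / (64 * α ^ 2) ∧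
      ‖k - (k₂ : ℂ)‖ ^ 3 / (64 * α ^ 2) ≥ 0 :=
  stmt_7_general α x t hα hxt k₂ hk₂ l hl k hk
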